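/- arXiv:2602.13401 — 5 statements merged into one kernel-verified Lean document; each statement's English description precedes it below -/
import Mathlib

section
/- For 2-adic units u and v, the Hilbert symbol (u,v)_2 equals (-1)^{ε(u)ε(v)}, where ε(u) denotes the class of (u-1)/2 in Z/2. -/
section HilbertAux
open PadicInt Polynomial


lemma sq_of_one_add_eight (t : ℤ_[2]) : ∃ w : ℤ_[2], w ^ 2 = 1 + 8 * t := by
  have h2 : ‖(2 : ℤ_[2])‖ = (2 : ℝ)⁻¹ := by
    simpa using PadicInt.norm_p (p := 2)
  set F : Polynomial ℤ_[2] := X ^ 2 - C (1 + 8 * t) with hF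
  have heval : F.eval 1 = -(8 * t) := by simp [hF]
  have hderiveval : F.derivative.eval 1 = 2 := by
    simp [hF, derivative_pow]
  have h8 : ‖(8 : ℤ_[2])‖ = (8 : ℝ)⁻¹ := by
    have : (8 : ℤ_[2]) = 2 ^ 3 := by norm_num
    rw [this, norm_pow, h2]; norm_num
  have hnorm : ‖F.eval 1‖ < ‖F.derivative.eval 1‖ ^ 2 := by
    rw [heval, hderiveval, h2, norm_neg]
    calc ‖(8 : ℤ_[2]) * t‖ ≤ ‖(8 : ℤ_[2])‖ * ‖t‖ := norm_mul_le _ _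
    _ ≤ (8 : ℝ)⁻¹ * 1 := by
        rw [h8]
        exact mul_le_mul_of_nonneg_left t.norm_le_one (by norm_num)
    _ < (2 : ℝ)⁻¹ ^ 2 := by norm_num
  obtain ⟨z, hz, -⟩ := hensels_lemma hnorm
  refine ⟨z, ?_⟩
  have : z ^ 2 - (1 + 8 * t) = 0 := by simpa [hF] using hz
  exact sub_eq_zero.mp this

lemma even_of (a : ℤ_[2]) (h : PadicInt.toZMod a = 0) : ∃ t, a = 2 * t := by
  have : a ∈ RingHom.ker (PadicInt.toZMod : ℤ_[2] →+* ZMod 2) := h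
  rw [PadicInt.ker_toZMod, PadicInt.maximalIdeal_eq_span_p, Ideal.mem_span_singleton] at this
  obtain ⟨t, ht⟩ := this
  exact ⟨t, by simpa using ht⟩

lemma odd_of (a : ℤ_[2]) (h : PadicInt.toZMod a = 1) : ∃ t, a = 1 + 2 * t := by
  obtain ⟨t, ht⟩ := even_of (a - 1) (by simp [map_sub, h])
  exact ⟨t, by linear_combination ht⟩

lemma toZMod_unit (u : ℤ_[2]) (hu : IsUnit u) : PadicInt.toZMod u = 1 := by
  have h01 : PadicInt.toZMod u = 0 ∨ PadicInt.toZMod u = 1 := by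
    generalize PadicInt.toZMod u = x; revert x; decide
  rcases h01 with h | h
  · exfalso
    obtain ⟨t, ht⟩ := even_of u h
    have h2 : ‖(2 : ℤ_[2])‖ = (2 : ℝ)⁻¹ := by simpa using PadicInt.norm_p (p := 2)
    have : ‖u‖ = 1 := PadicInt.isUnit_iff.mp hu
    rw [ht] at this
    have hle : ‖(2 : ℤ_[2]) * t‖ ≤ (2 : ℝ)⁻¹ * 1 := by
      calc ‖(2 : ℤ_[2]) * t‖ ≤ ‖(2 : ℤ_[2])‖ * ‖t‖ := norm_mul_le _ _
      _ ≤ (2 : ℝ)⁻¹ * 1 := by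
          rw [h2]; exact mul_le_mul_of_nonneg_left t.norm_le_one (by norm_num)
    rw [this] at hle; norm_num at hle
  · exact h

lemma solA (u v : ℤ_[2]) (hu : IsUnit u) (c : ℤ_[2]) (hv : v = 1 + 4 * c) :
    ∃ x y z : ℚ_[2], (x, y, z) ≠ (0, 0, 0) ∧
      z ^ 2 = (u : ℚ_[2]) * x ^ 2 + (v : ℚ_[2]) * y ^ 2 := by
  have h01 : PadicInt.toZMod c = 0 ∨ PadicInt.toZMod c = 1 := by
    generalize PadicInt.toZMod c = x; revert x; decide
  rcases h01 with h | h
  · obtain ⟨t, ht⟩ := even_of c h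
    obtain ⟨w, hw⟩ := sq_of_one_add_eight t
    refine ⟨0, 1, (w : ℚ_[2]), by simp [Prod.ext_iff], ?_⟩
    have : (w : ℚ_[2]) ^ 2 = ((1 + 8 * t : ℤ_[2]) : ℚ_[2]) := by
      rw [← hw]; push_cast; ring
    rw [this, hv, ht]
    have h8 : ((8 : ℤ_[2]) : ℚ_[2]) = 8 := by exact_mod_cast PadicInt.coe_natCast _
    have h4 : ((4 : ℤ_[2]) : ℚ_[2]) = 4 := by exact_mod_cast PadicInt.coe_natCast _
    have h2' : ((2 : ℤ_[2]) : ℚ_[2]) = 2 := by exact_mod_cast PadicInt.coe_natCast _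
    push_cast [h8, h4, h2']; ring
  · obtain ⟨t, ht⟩ := odd_of c h
    obtain ⟨s, hs⟩ := odd_of u (toZMod_unit u hu)
    obtain ⟨w, hw⟩ := sq_of_one_add_eight (1 + s + t)
    refine ⟨2, 1, (w : ℚ_[2]), by simp [Prod.ext_iff], ?_⟩
    have hww : w ^ 2 = 4 * u + v := by
      rw [hw, hs, hv, ht]; ring
    have : (w : ℚ_[2]) ^ 2 = ((4 * u + v : ℤ_[2]) : ℚ_[2]) := by
      rw [← hww]; push_cast; ring
    rw [this]
    have h4 : ((4 : ℤ_[2]) : ℚ_[2]) = 4 := by exact_mod_cast PadicInt.coe_natCast _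
    push_cast [h4]; ring

lemma key4 : ∀ X Y Z : ZMod (2 ^ 2), Z ^ 2 = 3 * X ^ 2 + 3 * Y ^ 2 →
    X ≠ 1 ∧ Y ≠ 1 ∧ Z ≠ 1 := by decide

lemma noSol (u v : ℤ_[2]) (hu3 : PadicInt.toZModPow 2 u = 3)
    (hv3 : PadicInt.toZModPow 2 v = 3) :
    ¬ ∃ x y z : ℚ_[2], (x, y, z) ≠ (0, 0, 0) ∧
      z ^ 2 = (u : ℚ_[2]) * x ^ 2 + (v : ℚ_[2]) * y ^ 2 := by
  rintro ⟨x, y, z, hne, heq⟩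
  obtain ⟨t, htm, hx, hy, hz⟩ : ∃ t : ℚ_[2], (t = x ∨ t = y ∨ t = z) ∧
      ‖x‖ ≤ ‖t‖ ∧ ‖y‖ ≤ ‖t‖ ∧ ‖z‖ ≤ ‖t‖ := by
    rcases le_total ‖x‖ ‖y‖ with h1 | h1
    · rcases le_total ‖y‖ ‖z‖ with h2 | h2
      · exact ⟨z, Or.inr (Or.inr rfl), h1.trans h2, h2, le_refl _⟩
      · exact ⟨y, Or.inr (Or.inl rfl), h1, le_refl _, h2⟩
    · rcases le_total ‖x‖ ‖z‖ with h2 | h2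
      · exact ⟨z, Or.inr (Or.inr rfl), h2, h1.trans h2, le_refl _⟩
      · exact ⟨x, Or.inl rfl, le_refl _, h1, h2⟩
  have ht0 : t ≠ 0 := by
    rintro rfl
    simp only [norm_zero, norm_le_zero_iff] at hx hy hz
    exact hne (by simp [hx, hy, hz])
  have htpos : (0 : ℝ) < ‖t‖ := norm_pos_iff.mpr ht0
  set X : ℤ_[2] := ⟨x / t, by rw [norm_div]; exact div_le_one_of_le₀ hx (norm_nonneg _)⟩ with hX
  set Y : ℤ_[2] := ⟨y / t, by rw [norm_div]; exact div_le_one_of_le₀ hy (norm_nonneg _)⟩ with hY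
  set Z : ℤ_[2] := ⟨z / t, by rw [norm_div]; exact div_le_one_of_le₀ hz (norm_nonneg _)⟩ with hZ
  have hq : (z / t) ^ 2 = (u : ℚ_[2]) * (x / t) ^ 2 + (v : ℚ_[2]) * (y / t) ^ 2 := by
    field_simp
    linear_combination heq
  have hE : Z ^ 2 = u * X ^ 2 + v * Y ^ 2 := by
    apply Subtype.ext
    push_cast
    exact hq
  have hphi : (PadicInt.toZModPow 2) Z ^ 2 =
      3 * (PadicInt.toZModPow 2) X ^ 2 + 3 * (PadicInt.toZModPow 2) Y ^ 2 := by
    have h := congrArg (PadicInt.toZModPow 2) hE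
    simp only [map_add, map_mul, map_pow] at h
    rw [hu3, hv3] at h
    exact h
  obtain ⟨hX1, hY1, hZ1⟩ := key4 _ _ _ hphi
  rcases htm with rfl | rfl | rfl
  · have h1 : X = 1 := Subtype.ext (div_self ht0)
    exact hX1 (by rw [h1, map_one])
  · have h1 : Y = 1 := Subtype.ext (div_self ht0)
    exact hY1 (by rw [h1, map_one])
  · have h1 : Z = 1 := Subtype.ext (div_self ht0)
    exact hZ1 (by rw [h1, map_one])

lemma toZModPow_three (u a t : ℤ_[2]) (ha : u = 1 + 2 * a) (hat : a = 1 + 2 * t) :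
    PadicInt.toZModPow 2 u = 3 := by
  have h : u = 3 + 4 * t := by rw [ha, hat]; ring
  rw [h, map_add, map_mul]
  have h3 : (PadicInt.toZModPow 2) (3 : ℤ_[2]) = 3 := map_ofNat _ 3
  have h4 : (PadicInt.toZModPow 2) (4 : ℤ_[2]) = 0 := by
    rw [show ((PadicInt.toZModPow 2) (4 : ℤ_[2])) = 4 from map_ofNat _ 4]; decide
  rw [h3, h4, zero_mul, add_zero]

end HilbertAux


open Classical in
/-- The 2-adic (more generally `p`-adic) Hilbert symbol: `(a,b)_p = 1` iff
`z^2 = a*x^2 + b*y^2` has a nontrivial solution over `ℚ_p`, and `-1` otherwise. -/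
noncomputable def hilbertSymbol (p : ℕ) [Fact p.Prime] (a b : ℚ_[p]) : ℤ :=
  if ∃ x y z : ℚ_[p], (x, y, z) ≠ (0, 0, 0) ∧ z ^ 2 = a * x ^ 2 + b * y ^ 2 then 1 else -1

/-- For 2-adic units `u` and `v`, the Hilbert symbol `(u,v)_2` equals `(-1)^{ε(u)ε(v)}`,
where `ε(u)` is the class of `(u-1)/2` in `ℤ/2`. -/
theorem hilbert_symbol_units_two (u v a b : ℤ_[2]) (hu : IsUnit u) (hv : IsUnit v)
    (ha : u = 1 + 2 * a) (hb : v = 1 + 2 * b) :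
    hilbertSymbol 2 (u : ℚ_[2]) (v : ℚ_[2]) =
      (-1) ^ ((PadicInt.toZMod a * PadicInt.toZMod b : ZMod 2)).val := by
  have h01a : PadicInt.toZMod a = 0 ∨ PadicInt.toZMod a = 1 := by
    generalize PadicInt.toZMod a = x; revert x; decide
  have h01b : PadicInt.toZMod b = 0 ∨ PadicInt.toZMod b = 1 := by
    generalize PadicInt.toZMod b = x; revert x; decide
  rcases h01b with hb0 | hb1
  · -- v ≡ 1 mod 4
    obtain ⟨t, ht⟩ := even_of b hb0
    have hsol := solA u v hu t (by rw [hb, ht]; ring)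
    rw [hilbertSymbol, if_pos hsol, hb0, mul_zero]
    simp
  · rcases h01a with ha0 | ha1
    · -- u ≡ 1 mod 4 : swap roles
      obtain ⟨t, ht⟩ := even_of a ha0
      obtain ⟨x, y, z, hne, heq⟩ := solA v u hv t (by rw [ha, ht]; ring)
      have hsol : ∃ x y z : ℚ_[2], (x, y, z) ≠ (0, 0, 0) ∧
          z ^ 2 = (u : ℚ_[2]) * x ^ 2 + (v : ℚ_[2]) * y ^ 2 := by
        refine ⟨y, x, z, ?_, by rw [heq]; ring⟩
        simp only [Ne, Prod.ext_iff] at hne ⊢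
        tauto
      rw [hilbertSymbol, if_pos hsol, ha0, zero_mul]
      simp
    · -- both ≡ 3 mod 4
      obtain ⟨s, hs⟩ := odd_of a ha1
      obtain ⟨t, ht⟩ := odd_of b hb1
      have hns := noSol u v (toZModPow_three u a s ha hs) (toZModPow_three v b t hb ht)
      rw [hilbertSymbol, if_neg hns, ha1, hb1, mul_one]
      decide
end

section
/- For a 2-adic unit u, the Hilbert symbol (2,u)_2 equals (-1)^{ω(u)}, where ω(u) denotes the class of (u^2-1)/8 in Z/2. -/
lemma hensel_sq {v : ℤ_[2]} (h : ‖v - 1‖ ≤ (2:ℝ)^(-3:ℤ)) : ∃ s : ℤ_[2], s^2 = v := by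
  have key : ‖Polynomial.eval (1:ℤ_[2]) (Polynomial.X^2 - Polynomial.C v)‖ <
      ‖Polynomial.eval 1 (Polynomial.derivative (Polynomial.X^2 - Polynomial.C v))‖ ^ 2 := by
    simp only [Polynomial.eval_sub, Polynomial.eval_pow, Polynomial.eval_X, Polynomial.eval_C,
      Polynomial.derivative_sub, Polynomial.derivative_X_pow, Polynomial.derivative_C, sub_zero,
      Polynomial.eval_mul, Polynomial.eval_natCast]
    have h2 : ‖(2:ℤ_[2])‖ = 2⁻¹ := by
      have := @PadicInt.norm_p 2 _
      norm_num at this ⊢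
      exact_mod_cast this
    have : ‖(1:ℤ_[2]) - v‖ ≤ (2:ℝ)^(-3:ℤ) := by rwa [← norm_neg, neg_sub]
    calc ‖(1:ℤ_[2])^2 - v‖ ≤ (2:ℝ)^(-3:ℤ) := by simpa using this
    _ < (2⁻¹)^2 := by norm_num
    _ = _ := by simp [h2]
  obtain ⟨z, hz, -⟩ := hensels_lemma key
  refine ⟨z, ?_⟩
  simpa [sub_eq_zero] using hz

set_option maxHeartbeats 2000000 in
lemma mod16_no_sol : ∀ u x y z : ZMod (2^4), u^2 = 9 → (x = 1 ∨ y = 1 ∨ z = 1) →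
    z^2 ≠ 2*x^2 + u*y^2 := by decide

lemma mod16_sq_one : ∀ a : ZMod (2^4), a^2 = 1 →
    ZMod.castHom (pow_dvd_pow 2 (by norm_num : 3 ≤ 4)) (ZMod (2^3)) a = 1 ∨
    ZMod.castHom (pow_dvd_pow 2 (by norm_num : 3 ≤ 4)) (ZMod (2^3)) a = 7 := by decide

lemma toZModPow_eq_zero_iff (n : ℕ) (x : ℤ_[2]) :
    PadicInt.toZModPow n x = 0 ↔ (2:ℤ_[2])^n ∣ x := by
  rw [← RingHom.mem_ker, PadicInt.ker_toZModPow, Ideal.mem_span_singleton]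
  norm_num

lemma toZMod_eq_zero_iff (x : ℤ_[2]) : PadicInt.toZMod x = 0 ↔ (2:ℤ_[2]) ∣ x := by
  rw [← RingHom.mem_ker, PadicInt.ker_toZMod, PadicInt.maximalIdeal_eq_span_p,
    Ideal.mem_span_singleton]
  norm_num

lemma norm_le_of_dvd {x : ℤ_[2]} (h : (2:ℤ_[2])^3 ∣ x) : ‖x‖ ≤ (2:ℝ)^(-3:ℤ) := by
  have := (PadicInt.norm_le_pow_iff_mem_span_pow x 3).2
    (by rwa [Ideal.mem_span_singleton, (by norm_num : ((2:ℕ):ℤ_[2]) = 2)])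
  simpa using this

lemma primitive_sol (x y z : ℚ_[2]) (u : ℤ_[2]) (hnt : (x,y,z) ≠ ((0:ℚ_[2]),(0:ℚ_[2]),(0:ℚ_[2])))
    (heq : z^2 = 2*x^2 + u*y^2) :
    ∃ X Y Z : ℤ_[2], (X = 1 ∨ Y = 1 ∨ Z = 1) ∧ Z^2 = 2*X^2 + u*Y^2 := by
  obtain ⟨w, hwx, hwy, hwz, hw⟩ : ∃ w : ℚ_[2], ‖x‖ ≤ ‖w‖ ∧ ‖y‖ ≤ ‖w‖ ∧ ‖z‖ ≤ ‖w‖ ∧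
      (w = x ∨ w = y ∨ w = z) := by
    by_cases h1 : ‖x‖ ≤ ‖y‖
    · by_cases h2 : ‖y‖ ≤ ‖z‖
      · exact ⟨z, h1.trans h2, h2, le_rfl, Or.inr (Or.inr rfl)⟩
      · exact ⟨y, h1, le_rfl, (not_le.1 h2).le, Or.inr (Or.inl rfl)⟩
    · by_cases h3 : ‖x‖ ≤ ‖z‖
      · exact ⟨z, h3, ((not_le.1 h1).le.trans h3), le_rfl, Or.inr (Or.inr rfl)⟩
      · exact ⟨x, le_rfl, (not_le.1 h1).le, (not_le.1 h3).le, Or.inl rfl⟩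
  have hw0 : w ≠ 0 := by
    rintro rfl
    simp only [norm_zero] at hwx hwy hwz
    exact hnt (by simp [norm_le_zero_iff.1 hwx, norm_le_zero_iff.1 hwy, norm_le_zero_iff.1 hwz])
  refine ⟨⟨x/w, by rw [norm_div]; exact div_le_one_of_le₀ hwx (norm_nonneg _)⟩,
    ⟨y/w, by rw [norm_div]; exact div_le_one_of_le₀ hwy (norm_nonneg _)⟩,
    ⟨z/w, by rw [norm_div]; exact div_le_one_of_le₀ hwz (norm_nonneg _)⟩, ?_, ?_⟩
  · rcases hw with h | h | h
    · exact Or.inl (PadicInt.ext (by simp [← h, div_self hw0]))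
    · exact Or.inr (Or.inl (PadicInt.ext (by simp [← h, div_self hw0])))
    · exact Or.inr (Or.inr (PadicInt.ext (by simp [← h, div_self hw0])))
  · apply PadicInt.ext
    push_cast
    show (z/w)^2 = 2*(x/w)^2 + (u:ℚ_[2])*(y/w)^2
    rw [div_pow, div_pow, div_pow, heq]
    ring

/-- For a 2-adic unit `u`, the Hilbert symbol `(2,u)_2` equals `(-1)^{ω(u)}`, where
`ω(u)` is the class of `(u^2-1)/8` in `ℤ/2`. -/
theorem hilbert_symbol_two_unit (u c : ℤ_[2]) (hu : IsUnit u) (hc : u ^ 2 = 1 + 8 * c) :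
    hilbertSymbol 2 (2 : ℚ_[2]) (u : ℚ_[2]) = (-1) ^ ((PadicInt.toZMod c : ZMod 2)).val := by
  have hcast : ∀ v : ℤ_[2], ZMod.castHom (pow_dvd_pow 2 (by norm_num : 3 ≤ 4)) (ZMod (2^3))
      (PadicInt.toZModPow 4 v) = PadicInt.toZModPow 3 v := by
    intro v
    rw [← PadicInt.zmod_cast_comp_toZModPow 3 4 (by norm_num)]
    rfl
  rcases (by decide : ∀ a : ZMod 2, a = 0 ∨ a = 1) (PadicInt.toZMod c) with h0 | h1
  · -- c even : symbol is 1
    rw [h0]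
    simp only [ZMod.val_zero, pow_zero]
    obtain ⟨d, hd⟩ := (toZMod_eq_zero_iff c).1 h0
    have he : u^2 = 1 + 16*d := by rw [hc, hd]; ring
    have hU : (PadicInt.toZModPow 4 u)^2 = 1 := by
      have h16 : PadicInt.toZModPow 4 ((16:ℤ_[2])*d) = 0 := by
        rw [map_mul, (toZModPow_eq_zero_iff 4 16).2 ⟨1, by norm_num⟩, zero_mul]
      have := congrArg (PadicInt.toZModPow 4) he
      rwa [map_pow, map_add, map_one, h16, add_zero] at this
    have hsol : ∃ x y z : ℚ_[2], (x, y, z) ≠ (0, 0, 0) ∧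
        z ^ 2 = 2 * x ^ 2 + (u:ℚ_[2]) * y ^ 2 := by
      rcases mod16_sq_one _ hU with hb | hb <;> rw [hcast] at hb
      · -- u ≡ 1 mod 8
        have hdvd : (2:ℤ_[2])^3 ∣ u - 1 := by
          rw [← toZModPow_eq_zero_iff, map_sub, map_one, hb, sub_self]
        obtain ⟨s, hs⟩ := hensel_sq (norm_le_of_dvd hdvd)
        refine ⟨0, 1, (s:ℚ_[2]), by simp, ?_⟩
        rw [← hs]; push_cast; ring
      · -- u ≡ 7 mod 8
        have hdvd : (2:ℤ_[2])^3 ∣ (2 + u) - 1 := by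
          rw [← toZModPow_eq_zero_iff, map_sub, map_add, map_one, hb, map_ofNat]
          decide
        obtain ⟨s, hs⟩ := hensel_sq (norm_le_of_dvd hdvd)
        have hs' : ((s:ℚ_[2]))^2 = 2 + (u:ℚ_[2]) := by
          rw [← PadicInt.coe_pow, hs, (by norm_num : (2:ℤ_[2]) = ((2:ℕ):ℤ_[2])), PadicInt.coe_add, PadicInt.coe_natCast]; norm_num
        refine ⟨1, 1, (s:ℚ_[2]), by simp, ?_⟩
        rw [hs']; ring
    unfold hilbertSymbol
    rw [if_pos hsol]
  · -- c odd : symbol is -1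
    rw [h1]
    rw [(by decide : ((1 : ZMod 2)).val = 1), pow_one]
    have hc1 : PadicInt.toZMod (c - 1) = 0 := by rw [map_sub, map_one, h1, sub_self]
    obtain ⟨d, hd⟩ := (toZMod_eq_zero_iff _).1 hc1
    have he : u^2 = 9 + 16*d := by
      have : c = 1 + 2*d := by linear_combination hd
      rw [hc, this]; ring
    have hU : (PadicInt.toZModPow 4 u)^2 = 9 := by
      have h16 : PadicInt.toZModPow 4 ((16:ℤ_[2])*d) = 0 := by
        rw [map_mul, (toZModPow_eq_zero_iff 4 16).2 ⟨1, by norm_num⟩, zero_mul]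
      have := congrArg (PadicInt.toZModPow 4) he
      rwa [map_pow, map_add, h16, add_zero, map_ofNat] at this
    have hno : ¬ ∃ x y z : ℚ_[2], (x, y, z) ≠ (0, 0, 0) ∧
        z ^ 2 = 2 * x ^ 2 + (u:ℚ_[2]) * y ^ 2 := by
      rintro ⟨x, y, z, hnt, heq⟩
      obtain ⟨X, Y, Z, hone, hEQ⟩ := primitive_sol x y z u hnt heq
      have := congrArg (PadicInt.toZModPow 4) hEQ
      rw [map_pow, map_add, map_mul, map_mul, map_pow, map_pow, map_ofNat] at this
      refine mod16_no_sol _ _ _ _ hU ?_ this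
      rcases hone with rfl | rfl | rfl <;> simp
    unfold hilbertSymbol
    rw [if_neg hno]
end

section
/- Let p be an odd prime and let a, b be nonzero elements of Q_p. Write a = p^{v(a)} a' and b = p^{v(b)} b' with a', b' units. Then the Hilbert symbol satisfies (a,b)_p = (-1)^{((p-1)/2)·v(a)v(b)} · (b'/p)^{v(a)} · (a'/p)^{v(b)}, where (·/p) is the Legendre symbol extended to p-adic units via reduction to F_p. -/
namespace HilbertTame

variable {p : ℕ} [Fact p.Prime]

def Sol (p : ℕ) [Fact p.Prime] (a b : ℚ_[p]) : Prop :=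
  ∃ x y z : ℚ_[p], (x, y, z) ≠ (0, 0, 0) ∧ z ^ 2 = a * x ^ 2 + b * y ^ 2

open Classical in
lemma hilbertSymbol_eq (a b : ℚ_[p]) :
    hilbertSymbol p a b = if Sol p a b then 1 else -1 := rfl

lemma toZMod_eq_zero_iff_dvd (x : ℤ_[p]) :
    PadicInt.toZMod x = 0 ↔ (p : ℤ_[p]) ∣ x := by
  rw [← RingHom.mem_ker, PadicInt.ker_toZMod, PadicInt.maximalIdeal_eq_span_p,
    Ideal.mem_span_singleton]

lemma isUnit_iff_toZMod_ne_zero (x : ℤ_[p]) :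
    IsUnit x ↔ PadicInt.toZMod x ≠ 0 := by
  constructor
  · intro h h0
    exact (h.map PadicInt.toZMod).ne_zero h0
  · intro h
    by_contra hu
    rw [PadicInt.not_isUnit_iff, PadicInt.norm_lt_one_iff_dvd, ←
      toZMod_eq_zero_iff_dvd] at hu
    exact h hu

lemma toZMod_natCast_val (t : ZMod p) :
    PadicInt.toZMod ((t.val : ℤ_[p])) = t := by
  rw [map_natCast, ZMod.natCast_zmod_val]

end HilbertTame
namespace HilbertTame
variable {p : ℕ} [Fact p.Prime]

lemma two_unit (hp : p ≠ 2) : IsUnit (2 : ℤ_[p]) := by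
  rw [isUnit_iff_toZMod_ne_zero]
  have h2 : PadicInt.toZMod (2 : ℤ_[p]) = ((2 : ℕ) : ZMod p) := by
    rw [map_ofNat]; norm_cast
  rw [h2, Ne, ZMod.natCast_eq_zero_iff]
  intro hpd
  exact hp ((Nat.prime_dvd_prime_iff_eq Fact.out Nat.prime_two).1 hpd)

set_option maxHeartbeats 1000000 in
lemma isSquare_of_toZMod (hp : p ≠ 2) {c : ℤ_[p]} (hc : IsUnit c)
    (h : IsSquare (PadicInt.toZMod c)) : IsSquare c := by
  obtain ⟨t, ht⟩ := h
  have ht0 : t ≠ 0 := by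
    intro h0
    rw [h0, mul_zero] at ht
    exact ((isUnit_iff_toZMod_ne_zero c).1 hc) ht
  set a : ℤ_[p] := (t.val : ℤ_[p]) with ha_def
  have hta : PadicInt.toZMod a = t := toZMod_natCast_val t
  have ha_unit : IsUnit a := (isUnit_iff_toZMod_ne_zero a).2 (by rw [hta]; exact ht0)
  set F : Polynomial ℤ_[p] := Polynomial.X ^ 2 - Polynomial.C c with hF
  have heval : F.eval a = a ^ 2 - c := by simp [hF]
  have hderiv : F.derivative.eval a = 2 * a := by
    simp [hF, Polynomial.derivative_sub, Polynomial.derivative_X_pow]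
    norm_num
  have hdnorm : ‖F.derivative.eval a‖ = 1 := by
    rw [hderiv]
    exact PadicInt.isUnit_iff.1 ((two_unit hp).mul ha_unit)
  have hFa0 : PadicInt.toZMod (F.eval a) = 0 := by
    rw [heval, map_sub, map_pow, hta, ht, sq, sub_self]
  obtain ⟨y, hy⟩ := (toZMod_eq_zero_iff_dvd _).1 hFa0
  have hnorm : ‖F.eval a‖ < ‖F.derivative.eval a‖ ^ 2 := by
    rw [hdnorm, one_pow, hy]
    calc ‖(p : ℤ_[p]) * y‖ = ‖(p : ℤ_[p])‖ * ‖y‖ := norm_mul _ _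
      _ ≤ (p : ℝ)⁻¹ * 1 := by
          rw [PadicInt.norm_p]
          exact mul_le_mul_of_nonneg_left (PadicInt.norm_le_one y) (by positivity)
      _ < 1 := by
          rw [mul_one, inv_lt_one_iff₀]
          right
          exact_mod_cast (Fact.out : p.Prime).one_lt
  obtain ⟨z, hz, -, -, -⟩ := hensels_lemma hnorm
  have hz' : z ^ 2 - c = 0 := by simpa [hF] using hz
  exact ⟨z, by rw [← sq]; exact (sub_eq_zero.mp hz').symm⟩

lemma exists_integral_sol {A B : ℤ_[p]}
    (h : Sol p (A : ℚ_[p]) (B : ℚ_[p])) :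
    ∃ x y z : ℤ_[p], (IsUnit x ∨ IsUnit y ∨ IsUnit z) ∧
      z ^ 2 = A * x ^ 2 + B * y ^ 2 := by
  obtain ⟨x, y, z, hne, heq⟩ := h
  have hne' : ¬(x = 0 ∧ y = 0 ∧ z = 0) := by
    simpa [Prod.ext_iff] using hne
  set M : ℝ := max ‖x‖ (max ‖y‖ ‖z‖) with hM
  have hxM : ‖x‖ ≤ M := le_max_left _ _
  have hyM : ‖y‖ ≤ M := le_trans (le_max_left _ _) (le_max_right _ _)
  have hzM : ‖z‖ ≤ M := le_trans (le_max_right _ _) (le_max_right _ _)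
  have hMmem : M = ‖x‖ ∨ M = ‖y‖ ∨ M = ‖z‖ := by
    rcases max_choice ‖x‖ (max ‖y‖ ‖z‖) with h1 | h1
    · exact Or.inl (hM.trans h1)
    · rcases max_choice ‖y‖ ‖z‖ with h2 | h2
      · exact Or.inr (Or.inl (hM.trans (h1.trans h2)))
      · exact Or.inr (Or.inr (hM.trans (h1.trans h2)))
  have hMpos : 0 < M := by
    rcases not_and_or.mp hne' with h0 | h0
    · exact lt_of_lt_of_le (norm_pos_iff.mpr h0) hxM
    · rcases not_and_or.mp h0 with h0 | h0
      · exact lt_of_lt_of_le (norm_pos_iff.mpr h0) hyM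
      · exact lt_of_lt_of_le (norm_pos_iff.mpr h0) hzM
  obtain ⟨w, hw0, hwM⟩ : ∃ w : ℚ_[p], w ≠ 0 ∧ M = ‖w‖ := by
    rcases hMmem with h1 | h1 | h1
    · exact ⟨x, fun h0 => by simp [h0] at h1; exact hMpos.ne' h1, h1⟩
    · exact ⟨y, fun h0 => by simp [h0] at h1; exact hMpos.ne' h1, h1⟩
    · exact ⟨z, fun h0 => by simp [h0] at h1; exact hMpos.ne' h1, h1⟩
  set m : ℤ := w.valuation with hm
  have hMval : M = (p : ℝ) ^ (-m) := by rw [hwM]; exact Padic.norm_eq_zpow_neg_valuation hw0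
  set c : ℚ_[p] := (p : ℚ_[p]) ^ (-m) with hc
  have hcn : ‖c‖ = (p : ℝ) ^ m := by
    rw [hc, Padic.norm_p_zpow, neg_neg]
  have hp0 : (p : ℝ) ≠ 0 := by exact_mod_cast (Fact.out : p.Prime).pos.ne'
  have hcM : ‖c‖ * M = 1 := by
    rw [hcn, hMval, ← zpow_add₀ hp0, add_neg_cancel, zpow_zero]
  have hc0 : c ≠ 0 := by
    intro h0
    rw [h0, norm_zero, zero_mul] at hcM
    exact zero_ne_one hcM
  have hsc : ∀ t : ℚ_[p], ‖t‖ ≤ M → ‖c * t‖ ≤ 1 := by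
    intro t ht
    rw [norm_mul]
    calc ‖c‖ * ‖t‖ ≤ ‖c‖ * M := by
          exact mul_le_mul_of_nonneg_left ht (norm_nonneg c)
      _ = 1 := hcM
  refine ⟨(⟨c * x, hsc x hxM⟩ : ℤ_[p]), (⟨c * y, hsc y hyM⟩ : ℤ_[p]), (⟨c * z, hsc z hzM⟩ : ℤ_[p]), ?_, ?_⟩
  · rcases hMmem with h1 | h1 | h1
    · exact Or.inl (PadicInt.isUnit_iff.2
        (by show ‖c * x‖ = 1; rw [norm_mul, ← h1]; exact hcM))
    · exact Or.inr (Or.inl (PadicInt.isUnit_iff.2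
        (by show ‖c * y‖ = 1; rw [norm_mul, ← h1]; exact hcM)))
    · exact Or.inr (Or.inr (PadicInt.isUnit_iff.2
        (by show ‖c * z‖ = 1; rw [norm_mul, ← h1]; exact hcM)))
  · apply Subtype.ext
    change (c * z) ^ 2 = (A : ℚ_[p]) * (c * x) ^ 2 + (B : ℚ_[p]) * (c * y) ^ 2
    linear_combination (c ^ 2) * heq
lemma sol_symm {a b : ℚ_[p]} (h : Sol p a b) : Sol p b a := by
  obtain ⟨x, y, z, hne, heq⟩ := h
  refine ⟨y, x, z, ?_, by rw [heq]; ring⟩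
  simp only [Ne, Prod.ext_iff, not_and] at hne ⊢
  tauto

lemma sol_sq_left {a b : ℚ_[p]} (c : ℚ_[p]) (hc : c ≠ 0) (h : Sol p a b) :
    Sol p (c ^ 2 * a) b := by
  obtain ⟨x, y, z, hne, heq⟩ := h
  have hne' : ¬(x = 0 ∧ y = 0 ∧ z = 0) := by simpa [Prod.ext_iff] using hne
  refine ⟨x / c, y, z, ?_, ?_⟩
  · simp only [Ne, Prod.ext_iff, not_and, div_eq_zero_iff] at hne' ⊢
    tauto
  · rw [heq]; field_simp
lemma exists_zmod_point (hp : p ≠ 2) {ub wb : ZMod p} (hu : ub ≠ 0) (hw : wb ≠ 0) :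
    ∃ α β : ZMod p, ub * α ^ 2 + wb * β ^ 2 = 1 := by
  have hcard : Fintype.card (ZMod p) % 2 = 1 := by
    rw [ZMod.card]
    exact (Nat.Prime.mod_two_eq_one_iff_ne_two Fact.out).mpr hp
  have hf2 : (Polynomial.C ub * Polynomial.X ^ 2).degree = 2 :=
    Polynomial.degree_C_mul_X_pow 2 hu
  have hg2 : (Polynomial.C wb * Polynomial.X ^ 2 - Polynomial.C 1).degree = 2 := by
    rw [Polynomial.degree_sub_eq_left_of_degree_lt]
    · exact Polynomial.degree_C_mul_X_pow 2 hw
    · rw [Polynomial.degree_C_mul_X_pow 2 hw]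
      exact lt_of_le_of_lt (Polynomial.degree_C_le) (by norm_num)
  obtain ⟨α, β, hab⟩ := FiniteField.exists_root_sum_quadratic hf2 hg2 hcard
  refine ⟨α, β, ?_⟩
  simp only [Polynomial.eval_add, Polynomial.eval_sub, Polynomial.eval_mul, Polynomial.eval_C,
    Polynomial.eval_pow, Polynomial.eval_X, Polynomial.eval_one] at hab
  linear_combination hab

lemma sol_unit_unit (hp : p ≠ 2) {u w : ℤ_[p]} (hu : IsUnit u) (hw : IsUnit w) :
    Sol p (u : ℚ_[p]) (w : ℚ_[p]) := by
  obtain ⟨α, β, hab⟩ := exists_zmod_point hp ((isUnit_iff_toZMod_ne_zero u).1 hu)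
    ((isUnit_iff_toZMod_ne_zero w).1 hw)
  set x₀ : ℤ_[p] := (α.val : ℤ_[p]) with hx₀
  set y₀ : ℤ_[p] := (β.val : ℤ_[p]) with hy₀
  set d : ℤ_[p] := u * x₀ ^ 2 + w * y₀ ^ 2 with hd
  have hdz : PadicInt.toZMod d = 1 := by
    rw [hd, map_add, map_mul, map_mul, map_pow, map_pow, toZMod_natCast_val,
      toZMod_natCast_val, hab]
  have hdu : IsUnit d := (isUnit_iff_toZMod_ne_zero d).2 (by rw [hdz]; exact one_ne_zero)
  have hds : IsSquare d := isSquare_of_toZMod hp hdu (by rw [hdz]; exact ⟨1, by ring⟩)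
  obtain ⟨s, hs⟩ := hds
  have hs0 : (s : ℚ_[p]) ≠ 0 := by
    rw [PadicInt.coe_ne_zero]
    intro h0
    rw [h0, mul_zero] at hs
    exact hdu.ne_zero hs
  refine ⟨(x₀ : ℚ_[p]), (y₀ : ℚ_[p]), (s : ℚ_[p]), ?_, ?_⟩
  · simp only [Ne, Prod.ext_iff, not_and]
    tauto
  · have : (s : ℚ_[p]) ^ 2 = ((d : ℤ_[p]) : ℚ_[p]) := by
      rw [hs]; push_cast; ring
    rw [this, hd]; push_cast; ring
lemma toZMod_p_eq_zero : PadicInt.toZMod ((p : ℤ_[p])) = 0 := by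
  rw [map_natCast, ZMod.natCast_self]

lemma p_int_ne_zero : ((p : ℤ_[p])) ≠ 0 := by
  intro h0
  have := (isUnit_iff_toZMod_ne_zero (p : ℤ_[p]))
  have h1 : ‖(p:ℤ_[p])‖ = 0 := by rw [h0, norm_zero]
  rw [PadicInt.norm_p] at h1
  have : (0:ℝ) < (p:ℝ)⁻¹ := by
    have : (0:ℝ) < (p:ℝ) := by exact_mod_cast (Fact.out : p.Prime).pos
    positivity
  linarith

lemma sol_p_unit_iff (hp : p ≠ 2) {u w : ℤ_[p]} (hu : IsUnit u) (hw : IsUnit w) :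
    Sol p ((p : ℚ_[p]) * (u : ℚ_[p])) (w : ℚ_[p]) ↔ IsSquare (PadicInt.toZMod w) := by
  constructor
  · intro h
    have e : ((((p : ℤ_[p]) * u : ℤ_[p])) : ℚ_[p]) = (p : ℚ_[p]) * (u : ℚ_[p]) := by
      push_cast; ring
    rw [← e] at h
    obtain ⟨X, Y, Z, hun, heq⟩ := exists_integral_sol h
    have hmod : PadicInt.toZMod Z ^ 2 =
        PadicInt.toZMod w * PadicInt.toZMod Y ^ 2 := by
      have := congrArg PadicInt.toZMod heq
      simpa [map_add, map_mul, map_pow, toZMod_p_eq_zero] using this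
    by_cases hY : PadicInt.toZMod Y = 0
    · exfalso
      have hZ : PadicInt.toZMod Z = 0 := by
        have h2 : PadicInt.toZMod Z ^ 2 = 0 := by rw [hmod, hY]; ring
        exact pow_eq_zero_iff (two_ne_zero) |>.1 h2
      obtain ⟨Y1, hY1⟩ := (toZMod_eq_zero_iff_dvd Y).1 hY
      obtain ⟨Z1, hZ1⟩ := (toZMod_eq_zero_iff_dvd Z).1 hZ
      have hX : PadicInt.toZMod X = 0 := by
        have hfac : (p : ℤ_[p]) * (u * X ^ 2) =
            (p : ℤ_[p]) * ((p : ℤ_[p]) * Z1 ^ 2 - w * ((p : ℤ_[p]) * Y1 ^ 2)) := by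
          rw [hY1, hZ1] at heq
          linear_combination -heq
        have hcancel : u * X ^ 2 =
            (p : ℤ_[p]) * Z1 ^ 2 - w * ((p : ℤ_[p]) * Y1 ^ 2) :=
          mul_left_cancel₀ p_int_ne_zero hfac
        have h3 : PadicInt.toZMod u * PadicInt.toZMod X ^ 2 = 0 := by
          have := congrArg PadicInt.toZMod hcancel
          simpa [map_mul, map_sub, map_pow, toZMod_p_eq_zero] using this
        rcases mul_eq_zero.1 h3 with h4 | h4
        · exact absurd h4 ((isUnit_iff_toZMod_ne_zero u).1 hu)
        · exact pow_eq_zero_iff (two_ne_zero) |>.1 h4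
      rcases hun with h5 | h5 | h5
      · exact (isUnit_iff_toZMod_ne_zero X).1 h5 hX
      · exact (isUnit_iff_toZMod_ne_zero Y).1 h5 hY
      · exact (isUnit_iff_toZMod_ne_zero Z).1 h5 hZ
    · refine ⟨PadicInt.toZMod Z / PadicInt.toZMod Y, ?_⟩
      rw [div_mul_div_comm, eq_div_iff (mul_ne_zero hY hY)]
      linear_combination -hmod
  · intro h
    obtain ⟨s, hs⟩ := isSquare_of_toZMod hp hw h
    refine ⟨0, 1, (s : ℚ_[p]), ?_, ?_⟩
    · simp [Prod.ext_iff]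
    · rw [show ((s : ℚ_[p])) ^ 2 = ((w : ℤ_[p]) : ℚ_[p]) by rw [hs]; push_cast; ring]
      ring

lemma sol_p_p_iff (hp : p ≠ 2) {u w : ℤ_[p]} (hu : IsUnit u) (hw : IsUnit w) :
    Sol p ((p : ℚ_[p]) * (u : ℚ_[p])) ((p : ℚ_[p]) * (w : ℚ_[p])) ↔
      IsSquare (-(PadicInt.toZMod u * PadicInt.toZMod w)) := by
  constructor
  · intro h
    have e1 : ((((p : ℤ_[p]) * u : ℤ_[p])) : ℚ_[p]) = (p : ℚ_[p]) * (u : ℚ_[p]) := by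
      push_cast; ring
    have e2 : ((((p : ℤ_[p]) * w : ℤ_[p])) : ℚ_[p]) = (p : ℚ_[p]) * (w : ℚ_[p]) := by
      push_cast; ring
    rw [← e1, ← e2] at h
    obtain ⟨X, Y, Z, hun, heq⟩ := exists_integral_sol h
    have hZ : PadicInt.toZMod Z = 0 := by
      have := congrArg PadicInt.toZMod heq
      simp only [map_add, map_mul, map_pow, toZMod_p_eq_zero, zero_mul] at this
      rw [add_zero] at this
      exact pow_eq_zero_iff (two_ne_zero) |>.1 this
    obtain ⟨Z1, hZ1⟩ := (toZMod_eq_zero_iff_dvd Z).1 hZ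
    have hcancel : u * X ^ 2 + w * Y ^ 2 = (p : ℤ_[p]) * Z1 ^ 2 := by
      apply mul_left_cancel₀ (p_int_ne_zero (p := p))
      rw [hZ1] at heq
      linear_combination -heq
    have hmod : PadicInt.toZMod u * PadicInt.toZMod X ^ 2 +
        PadicInt.toZMod w * PadicInt.toZMod Y ^ 2 = 0 := by
      have := congrArg PadicInt.toZMod hcancel
      simpa [map_add, map_mul, map_pow, toZMod_p_eq_zero] using this
    have hX : PadicInt.toZMod X ≠ 0 := by
      intro hX0
      have hY0 : PadicInt.toZMod Y = 0 := by
        have h4 : PadicInt.toZMod w * PadicInt.toZMod Y ^ 2 = 0 := by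
          rw [hX0] at hmod
          linear_combination hmod
        rcases mul_eq_zero.1 h4 with h5 | h5
        · exact absurd h5 ((isUnit_iff_toZMod_ne_zero w).1 hw)
        · exact pow_eq_zero_iff (two_ne_zero) |>.1 h5
      rcases hun with h5 | h5 | h5
      · exact (isUnit_iff_toZMod_ne_zero X).1 h5 hX0
      · exact (isUnit_iff_toZMod_ne_zero Y).1 h5 hY0
      · exact (isUnit_iff_toZMod_ne_zero Z).1 h5 hZ
    have hY : PadicInt.toZMod Y ≠ 0 := by
      intro hY0
      apply hX
      have h4 : PadicInt.toZMod u * PadicInt.toZMod X ^ 2 = 0 := by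
        rw [hY0] at hmod
        linear_combination hmod
      rcases mul_eq_zero.1 h4 with h5 | h5
      · exact absurd h5 ((isUnit_iff_toZMod_ne_zero u).1 hu)
      · exact pow_eq_zero_iff (two_ne_zero) |>.1 h5
    refine ⟨PadicInt.toZMod u * PadicInt.toZMod X / PadicInt.toZMod Y, ?_⟩
    rw [div_mul_div_comm, eq_div_iff (mul_ne_zero hY hY)]
    have hu0 : PadicInt.toZMod u ≠ 0 := (isUnit_iff_toZMod_ne_zero u).1 hu
    field_simp
    linear_combination -hmod
  · intro h
    have hd : IsUnit (-(u * w)) := by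
      rw [IsUnit.neg_iff]
      exact hu.mul hw
    obtain ⟨s, hs⟩ := isSquare_of_toZMod hp hd (by
      rw [map_neg, map_mul]; exact h)
    refine ⟨(s : ℚ_[p]), (u : ℚ_[p]), 0, ?_, ?_⟩
    · have : (u : ℚ_[p]) ≠ 0 := by
        rw [PadicInt.coe_ne_zero]
        exact hu.ne_zero
      simp only [Ne, Prod.ext_iff, not_and]
      tauto
    · have hss : ((s : ℚ_[p])) ^ 2 = -((u : ℚ_[p]) * (w : ℚ_[p])) := by
        have : ((-(u * w) : ℤ_[p]) : ℚ_[p]) = ((s * s : ℤ_[p]) : ℚ_[p]) := by rw [← hs]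
        push_cast at this
        rw [sq]
        linear_combination -this
      rw [show (0:ℚ_[p]) ^ 2 = 0 by ring]
      linear_combination (-(p : ℚ_[p]) * (u : ℚ_[p])) * hss
lemma pow_sq_one_even {t : ℤ} (ht : t ^ 2 = 1) {n : ℕ} (hn : Even n) : t ^ n = 1 := by
  obtain ⟨k, rfl⟩ := hn
  rw [← two_mul, pow_mul, ht, one_pow]

lemma pow_sq_one_odd {t : ℤ} (ht : t ^ 2 = 1) {n : ℕ} (hn : Odd n) : t ^ n = t := by
  obtain ⟨k, rfl⟩ := hn
  rw [pow_add, pow_mul, ht, one_pow, pow_one, one_mul]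

lemma sol_sq_left_iff {a b : ℚ_[p]} (c : ℚ_[p]) (hc : c ≠ 0) :
    Sol p (c ^ 2 * a) b ↔ Sol p a b := by
  constructor
  · intro h
    have h2 := sol_sq_left c⁻¹ (inv_ne_zero hc) h
    have e : c⁻¹ ^ 2 * (c ^ 2 * a) = a := by field_simp
    rwa [e] at h2
  · exact sol_sq_left c hc

open Classical in
lemma hilbertSymbol_congr {a b a₂ b₂ : ℚ_[p]} (h : Sol p a b ↔ Sol p a₂ b₂) :
    hilbertSymbol p a b = hilbertSymbol p a₂ b₂ := by
  rw [hilbertSymbol_eq, hilbertSymbol_eq]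
  by_cases h1 : Sol p a b
  · rw [if_pos h1, if_pos (h.mp h1)]
  · rw [if_neg h1, if_neg (fun h2 => h1 (h.mpr h2))]
lemma sol_sq_right_iff {a b : ℚ_[p]} (c : ℚ_[p]) (hc : c ≠ 0) :
    Sol p a (c ^ 2 * b) ↔ Sol p a b := by
  constructor
  · intro h; exact sol_symm ((sol_sq_left_iff c hc).1 (sol_symm h))
  · intro h; exact sol_symm ((sol_sq_left_iff c hc).2 (sol_symm h))

end HilbertTame

open HilbertTame

/-- The tame formula for the Hilbert symbol at an odd prime `p`: writing
`a = p^{v(a)} a'` and `b = p^{v(b)} b'` with `a', b'` units, one has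
`(a,b)_p = (-1)^{((p-1)/2)·v(a)v(b)} · (b'/p)^{v(a)} · (a'/p)^{v(b)}`, where `(·/p)` is the
Legendre symbol applied to the reduction of the unit modulo `p`. -/
theorem hilbert_symbol_tame (p : ℕ) [Fact p.Prime] (hp : p ≠ 2)
    (a b : ℚ_[p]) (ha0 : a ≠ 0) (hb0 : b ≠ 0)
    (va vb : ℤ) (a' b' : ℤ_[p]) (ha' : IsUnit a') (hb' : IsUnit b')
    (ha : a = (p : ℚ_[p]) ^ va * (a' : ℚ_[p])) (hb : b = (p : ℚ_[p]) ^ vb * (b' : ℚ_[p])) :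
    hilbertSymbol p a b =
      (-1) ^ ((((p : ℤ) - 1) / 2 * va * vb).natAbs) *
        legendreSym p ((PadicInt.toZMod b').val : ℤ) ^ va.natAbs *
        legendreSym p ((PadicInt.toZMod a').val : ℤ) ^ vb.natAbs := by
  classical
  have hprime : p.Prime := Fact.out
  have hpQ : (p : ℚ_[p]) ≠ 0 := Nat.cast_ne_zero.mpr hprime.pos.ne'
  set na : ℤ := ((PadicInt.toZMod a').val : ℤ) with hna_def
  set nb : ℤ := ((PadicInt.toZMod b').val : ℤ) with hnb_def
  have hacast : ((na : ℤ) : ZMod p) = PadicInt.toZMod a' := by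
    rw [hna_def]; push_cast; exact ZMod.natCast_zmod_val _
  have hbcast : ((nb : ℤ) : ZMod p) = PadicInt.toZMod b' := by
    rw [hnb_def]; push_cast; exact ZMod.natCast_zmod_val _
  have haz : PadicInt.toZMod a' ≠ 0 := (isUnit_iff_toZMod_ne_zero a').1 ha'
  have hbz : PadicInt.toZMod b' ≠ 0 := (isUnit_iff_toZMod_ne_zero b').1 hb'
  have hacast0 : ((na : ℤ) : ZMod p) ≠ 0 := by rw [hacast]; exact haz
  have hbcast0 : ((nb : ℤ) : ZMod p) ≠ 0 := by rw [hbcast]; exact hbz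
  set εa : ℤ := legendreSym p na with hεa_def
  set εb : ℤ := legendreSym p nb with hεb_def
  have hεa2 : εa ^ 2 = 1 := legendreSym.sq_one p hacast0
  have hεb2 : εb ^ 2 = 1 := legendreSym.sq_one p hbcast0
  have hεa1 : εa = 1 ↔ IsSquare (PadicInt.toZMod a') := by
    rw [hεa_def, legendreSym.eq_one_iff p hacast0, hacast]
  have hεb1 : εb = 1 ↔ IsSquare (PadicInt.toZMod b') := by
    rw [hεb_def, legendreSym.eq_one_iff p hbcast0, hbcast]
  have hεa_pm : εa = 1 ∨ εa = -1 := mul_self_eq_one_iff.mp (by rw [← pow_two]; exact hεa2)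
  have hεb_pm : εb = 1 ∨ εb = -1 := mul_self_eq_one_iff.mp (by rw [← pow_two]; exact hεb2)
  set k : ℕ := p / 2 with hk_def
  have hpodd : p % 2 = 1 := (Nat.Prime.mod_two_eq_one_iff_ne_two Fact.out).mpr hp
  have hK : ((p : ℤ) - 1) / 2 = (k : ℤ) := by omega
  -- reduce exponents modulo squares
  have key : ∀ v : ℤ, (p : ℚ_[p]) ^ v =
      ((p : ℚ_[p]) ^ (v / 2)) ^ 2 * (p : ℚ_[p]) ^ (v % 2) := by
    intro v
    rw [sq, ← zpow_add₀ hpQ, ← zpow_add₀ hpQ]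
    congr 1
    omega
  have ea : a = ((p : ℚ_[p]) ^ (va / 2)) ^ 2 * ((p : ℚ_[p]) ^ (va % 2) * (a' : ℚ_[p])) := by
    rw [ha, key va]; ring
  have eb : b = ((p : ℚ_[p]) ^ (vb / 2)) ^ 2 * ((p : ℚ_[p]) ^ (vb % 2) * (b' : ℚ_[p])) := by
    rw [hb, key vb]; ring
  have hstep : hilbertSymbol p a b =
      hilbertSymbol p ((p : ℚ_[p]) ^ (va % 2) * (a' : ℚ_[p]))
        ((p : ℚ_[p]) ^ (vb % 2) * (b' : ℚ_[p])) := by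
    apply hilbertSymbol_congr
    rw [ea, eb, sol_sq_left_iff _ (zpow_ne_zero _ hpQ), sol_sq_right_iff _ (zpow_ne_zero _ hpQ)]
  rw [hstep]
  rcases Int.emod_two_eq va with hA | hA <;> rcases Int.emod_two_eq vb with hB | hB
  · -- both even
    have hEva : Even va := Int.even_iff.mpr hA
    have hEvb : Even vb := Int.even_iff.mpr hB
    rw [hA, hB]
    simp only [zpow_zero, one_mul]
    rw [hilbertSymbol_eq, if_pos (sol_unit_unit hp ha' hb'),
      pow_sq_one_even (by norm_num) (Int.natAbs_even.mpr ((hEva.mul_left _).mul_right _)),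
      pow_sq_one_even hεb2 (Int.natAbs_even.mpr hEva),
      pow_sq_one_even hεa2 (Int.natAbs_even.mpr hEvb)]
    norm_num
  · -- va even, vb odd
    have hEva : Even va := Int.even_iff.mpr hA
    have hOvb : Odd vb := Int.odd_iff.mpr hB
    rw [hA, hB]
    simp only [zpow_zero, zpow_one, one_mul]
    rw [pow_sq_one_even (by norm_num)
        (Int.natAbs_even.mpr ((hEva.mul_left _).mul_right _)),
      pow_sq_one_even hεb2 (Int.natAbs_even.mpr hEva),
      pow_sq_one_odd hεa2 (Int.natAbs_odd.mpr hOvb)]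
    have hiff : Sol p (a' : ℚ_[p]) ((p : ℚ_[p]) * (b' : ℚ_[p])) ↔
        IsSquare (PadicInt.toZMod a') := by
      constructor
      · intro h; exact (sol_p_unit_iff hp hb' ha').1 (sol_symm h)
      · intro h; exact sol_symm ((sol_p_unit_iff hp hb' ha').2 h)
    rw [hilbertSymbol_eq]
    by_cases hsq : IsSquare (PadicInt.toZMod a')
    · rw [if_pos (hiff.mpr hsq), hεa1.mpr hsq]
      norm_num
    · rw [if_neg (fun h => hsq (hiff.mp h))]
      rcases hεa_pm with h1 | h1
      · exact absurd (hεa1.mp h1) hsq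
      · rw [h1]; norm_num
  · -- va odd, vb even
    have hOva : Odd va := Int.odd_iff.mpr hA
    have hEvb : Even vb := Int.even_iff.mpr hB
    rw [hA, hB]
    simp only [zpow_zero, zpow_one, one_mul]
    rw [pow_sq_one_even (by norm_num)
        (Int.natAbs_even.mpr (hEvb.mul_left _)),
      pow_sq_one_odd hεb2 (Int.natAbs_odd.mpr hOva),
      pow_sq_one_even hεa2 (Int.natAbs_even.mpr hEvb)]
    rw [hilbertSymbol_eq]
    by_cases hsq : IsSquare (PadicInt.toZMod b')
    · rw [if_pos ((sol_p_unit_iff hp ha' hb').mpr hsq), hεb1.mpr hsq]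
      norm_num
    · rw [if_neg (fun h => hsq ((sol_p_unit_iff hp ha' hb').mp h))]
      rcases hεb_pm with h1 | h1
      · exact absurd (hεb1.mp h1) hsq
      · rw [h1]; norm_num
  · -- both odd
    have hOva : Odd va := Int.odd_iff.mpr hA
    have hOvb : Odd vb := Int.odd_iff.mpr hB
    rw [hA, hB]
    simp only [zpow_one]
    have hEfirst : (-1 : ℤ) ^ ((((p : ℤ) - 1) / 2 * va * vb).natAbs) = (-1 : ℤ) ^ k := by
      rw [hK]
      rcases Nat.even_or_odd k with hke | hko
      · have hkz : Even (k : ℤ) := Int.even_coe_nat k |>.mpr hke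
        rw [pow_sq_one_even (by norm_num)
          (Int.natAbs_even.mpr ((hkz.mul_right _).mul_right _)), hke.neg_one_pow]
      · have hkz : Odd (k : ℤ) := Int.odd_coe_nat k |>.mpr hko
        rw [pow_sq_one_odd (by norm_num)
          (Int.natAbs_odd.mpr ((hkz.mul hOva).mul hOvb)), hko.neg_one_pow]
    rw [hEfirst, pow_sq_one_odd hεb2 (Int.natAbs_odd.mpr hOva),
      pow_sq_one_odd hεa2 (Int.natAbs_odd.mpr hOvb)]
    have hm0 : ((-(na * nb) : ℤ) : ZMod p) ≠ 0 := by
      rw [Int.cast_neg, Int.cast_mul, hacast, hbcast]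
      exact neg_ne_zero.mpr (mul_ne_zero haz hbz)
    have hmcast : ((-(na * nb) : ℤ) : ZMod p) =
        -(PadicInt.toZMod a' * PadicInt.toZMod b') := by
      rw [Int.cast_neg, Int.cast_mul, hacast, hbcast]
    have hprod : legendreSym p (-(na * nb)) = legendreSym p (-1) * (εa * εb) := by
      rw [show -(na * nb) = -1 * (na * nb) by ring, legendreSym.mul, legendreSym.mul]
    have hL : legendreSym p (-1) = (-1 : ℤ) ^ k := by
      rw [legendreSym.at_neg_one hp, ZMod.χ₄_eq_neg_one_pow hpodd]
    rw [hilbertSymbol_eq]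
    by_cases hsq : IsSquare (-(PadicInt.toZMod a' * PadicInt.toZMod b'))
    · rw [if_pos ((sol_p_p_iff hp ha' hb').mpr hsq)]
      have h1 : legendreSym p (-(na * nb)) = 1 :=
        (legendreSym.eq_one_iff p hm0).mpr (by rw [hmcast]; exact hsq)
      rw [hprod, hL] at h1
      linear_combination -h1
    · rw [if_neg (fun h => hsq ((sol_p_p_iff hp ha' hb').mp h))]
      have h1 : legendreSym p (-(na * nb)) = -1 :=
        (legendreSym.eq_neg_one_iff p).mpr (by rw [hmcast]; exact hsq)
      rw [hprod, hL] at h1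
      linear_combination -h1
end

section
/- Let E/F be an abelian extension of fields with Galois group Γ, and let c: Γ × Γ → E^× be a 2-cocycle. Then the crossed product algebra X = ⊕_{γ∈Γ} E·x_γ with relations x_γ·e = γ(e)·x_γ and x_γ·x_δ = c(γ,δ)·x_{γδ} is a central simple F-algebra of F-dimension [E:F]^2. -/
open scoped TensorProduct

/-- Let `E/F` be a finite Galois extension of fields with abelian Galois group
`Γ = Gal(E/F)`, and let `c : Γ × Γ → Eˣ` be a 2-cocycle.  Then the crossed product algebra
`X = ⊕_{γ ∈ Γ} E·x_γ` with relations `x_γ · e = γ(e) · x_γ` and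
`x_γ · x_δ = c(γ,δ) · x_{γδ}` is a central simple `F`-algebra of `F`-dimension `[E:F]^2`.
(The crossed product is axiomatized as an `F`-algebra `X` together with an embedding
`ι : E → X` and units `x_γ` satisfying the relations, such that every element of `X` is
uniquely `∑_γ ι(e_γ) x_γ`.) -/
theorem crossed_product_central_simple
    (F E : Type*) [Field F] [Field E] [Algebra F E] [FiniteDimensional F E] [IsGalois F E]
    (hab : ∀ γ δ : E ≃ₐ[F] E, γ * δ = δ * γ)
    (c : (E ≃ₐ[F] E) → (E ≃ₐ[F] E) → Eˣ)
    (hc : ∀ γ δ η : E ≃ₐ[F] E,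
      γ ((c δ η : E)) * (c γ (δ * η) : E) = (c γ δ : E) * (c (γ * δ) η : E))
    (X : Type*) [Ring X] [Algebra F X]
    (ι : E →ₐ[F] X) (x : (E ≃ₐ[F] E) → Xˣ)
    (hcomm : ∀ (γ : E ≃ₐ[F] E) (e : E), (x γ : X) * ι e = ι (γ e) * (x γ : X))
    (hmul : ∀ γ δ : E ≃ₐ[F] E, (x γ : X) * (x δ : X) = ι (c γ δ) * (x (γ * δ) : X))
    (hbasis : ∀ y : X, ∃! f : (E ≃ₐ[F] E) → E, y = ∑ γ, ι (f γ) * (x γ : X)) :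
    Algebra.IsCentral F X ∧ IsSimpleRing X ∧
      Module.finrank F X = Module.finrank F E ^ 2 := by
  classical
  choose rep hrep hrepu using hbasis
  set L : ((E ≃ₐ[F] E) → E) → X := fun f => ∑ γ, ι (f γ) * (x γ : X) with hLdef
  have hrepL : ∀ f, rep (L f) = f := fun f => (hrepu (L f) f rfl).symm
  have hLrep : ∀ y, L (rep y) = y := fun y => (hrep y).symm
  have hLinj : Function.Injective L := fun f g h => by
    rw [← hrepL f, ← hrepL g, h]
  have hL0 : L 0 = 0 := by simp [hLdef]
  have hrep0 : rep (0 : X) = 0 := by rw [← hL0, hrepL]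
  haveI : Nontrivial X := by
    refine ⟨L 0, L 1, fun h => ?_⟩
    exact one_ne_zero (congrFun (hLinj h).symm 1)
  have hιinj : Function.Injective ι := ι.toRingHom.injective
  -- multiplication rules at the level of coefficient functions
  have hmulι : ∀ (f : (E ≃ₐ[F] E) → E) (e : E),
      L f * ι e = L (fun γ => f γ * γ e) := by
    intro f e
    simp only [hLdef]
    simp only [Finset.sum_mul]
    refine Finset.sum_congr rfl fun γ _ => ?_
    rw [mul_assoc, hcomm, ← mul_assoc, ← map_mul]
  have hιmul : ∀ (f : (E ≃ₐ[F] E) → E) (e : E),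
      ι e * L f = L (fun γ => e * f γ) := by
    intro f e
    simp only [hLdef]
    simp only [Finset.mul_sum]
    refine Finset.sum_congr rfl fun γ _ => ?_
    rw [← mul_assoc, ← map_mul]
  have hcancel : ∀ (γ : E ≃ₐ[F] E) (u v : X), u * (x γ : X) = v * (x γ : X) → u = v := by
    intro γ u v h
    have := congrArg (fun y : X => y * (((x γ)⁻¹ : Xˣ) : X)) h
    simpa [mul_assoc] using this
  have hx1 : (x 1 : X) = ι (c 1 1) := by
    refine hcancel 1 _ _ ?_
    simpa using hmul 1 1
  have hLsub : ∀ f g, L (f - g) = L f - L g := by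
    intro f g
    simp [hLdef, map_sub, sub_mul, Finset.sum_sub_distrib]
  have hwit : ∀ γ : E ≃ₐ[F] E, γ ≠ 1 → ∃ e : E, γ e ≠ e := by
    intro γ hγ
    by_contra h
    push_neg at h
    exact hγ (AlgEquiv.ext h)
  -- right multiplication by (x γ₀)⁻¹
  have hxinv : ∀ (γ γ₀ : E ≃ₐ[F] E),
      (x γ : X) * ((x γ₀)⁻¹ : Xˣ) = ι ((c (γ * γ₀⁻¹) γ₀ : E)⁻¹) * (x (γ * γ₀⁻¹) : X) := by
    intro γ γ₀
    have h := hmul (γ * γ₀⁻¹) γ₀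
    rw [inv_mul_cancel_right] at h
    calc (x γ : X) * ((x γ₀)⁻¹ : Xˣ)
        = ι ((c (γ * γ₀⁻¹) γ₀ : E)⁻¹) * (ι (c (γ * γ₀⁻¹) γ₀) * (x γ : X)) * ((x γ₀)⁻¹ : Xˣ) := by
          rw [← mul_assoc, ← map_mul, inv_mul_cancel₀ (c (γ * γ₀⁻¹) γ₀).ne_zero, map_one, one_mul]
      _ = ι ((c (γ * γ₀⁻¹) γ₀ : E)⁻¹) * ((x (γ * γ₀⁻¹) : X) * (x γ₀ : X)) * ((x γ₀)⁻¹ : Xˣ) := by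
          rw [h]
      _ = ι ((c (γ * γ₀⁻¹) γ₀ : E)⁻¹) * (x (γ * γ₀⁻¹) : X) := by
          rw [mul_assoc, mul_assoc, Units.mul_inv, mul_one]
  have hshift : ∀ (f : (E ≃ₐ[F] E) → E) (γ₀ : E ≃ₐ[F] E),
      L f * ((x γ₀)⁻¹ : Xˣ) = L (fun δ => f (δ * γ₀) * (c δ γ₀ : E)⁻¹) := by
    intro f γ₀
    simp only [hLdef]
    simp only [Finset.sum_mul]
    rw [show (∑ δ, ι ((fun δ => f (δ * γ₀) * (c δ γ₀ : E)⁻¹) δ) * (x δ : X)) =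
        ∑ γ, ι (f γ * (c (γ * γ₀⁻¹) γ₀ : E)⁻¹) * (x (γ * γ₀⁻¹) : X) from
      Fintype.sum_equiv (Equiv.mulRight γ₀) _ _ (fun δ => by
        simp [Equiv.coe_mulRight, mul_inv_cancel_right])]
    refine Finset.sum_congr rfl fun γ _ => ?_
    rw [mul_assoc, hxinv, ← mul_assoc, ← map_mul]
  -- fixed points are in F
  have hfixed : ∀ a : E, (∀ γ : E ≃ₐ[F] E, γ a = a) → ∃ b : F, algebraMap F E b = a := by
    intro a hfix
    have h1 : IntermediateField.fixedField (⊤ : Subgroup (E ≃ₐ[F] E)) = ⊥ :=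
      ((IsGalois.tfae (F := F) (E := E)).out 0 1).mp (inferInstance : IsGalois F E)
    have h2 : a ∈ IntermediateField.fixedField (⊤ : Subgroup (E ≃ₐ[F] E)) := fun σ => hfix σ.1
    rw [h1, IntermediateField.mem_bot] at h2
    exact h2
  refine ⟨⟨?_⟩, ?_, ?_⟩
  · -- centrality
    intro z hz
    rw [Subalgebra.mem_center_iff] at hz
    have hstep1 : ∀ γ : E ≃ₐ[F] E, γ ≠ 1 → rep z γ = 0 := by
      intro γ hγ
      obtain ⟨e, he⟩ := hwit γ hγ
      have h1 : L (fun δ => rep z δ * δ e) = L (fun δ => e * rep z δ) := by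
        rw [← hmulι, ← hιmul, hLrep, hz (ι e)]
      have h2 := congrFun (hLinj h1) γ
      simp only [mul_comm e (rep z γ)] at h2
      have h3 : rep z γ * (γ e - e) = 0 := by ring_nf; rw [mul_comm] at h2 ⊢; linear_combination h2
      rcases mul_eq_zero.mp h3 with h | h
      · exact h
      · exact absurd (sub_eq_zero.mp h) he
    have hz1 : z = ι (rep z 1 * (c 1 1 : E)) := by
      conv_lhs => rw [← hLrep z]
      simp only [hLdef]
      rw [Finset.sum_eq_single 1 (fun γ _ hγ => by rw [hstep1 γ hγ]; simp) (by simp), hx1,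
        ← map_mul]
    set a : E := rep z 1 * (c 1 1 : E) with ha
    have hfix : ∀ γ : E ≃ₐ[F] E, γ a = a := by
      intro γ
      have h1 : (x γ : X) * z = z * (x γ : X) := hz (x γ)
      rw [hz1] at h1
      rw [hcomm] at h1
      exact hιinj (hcancel γ _ _ h1)
    obtain ⟨b, hb⟩ := hfixed a hfix
    rw [Algebra.mem_bot]
    refine ⟨b, ?_⟩
    rw [hz1, ← hb]
    exact (ι.commutes b).symm
  · -- simplicity
    refine IsSimpleRing.of_eq_bot_or_eq_top fun I => ?_
    rw [or_iff_not_imp_left]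
    intro hIbot
    have hex0 : ∃ z, z ∈ I ∧ z ≠ 0 := by
      by_contra h
      push_neg at h
      exact hIbot (TwoSidedIdeal.ext fun y =>
        ⟨fun hy => (TwoSidedIdeal.mem_bot _).mpr (by_contra fun h0 => h0 (h y hy)),
         fun hy => ((TwoSidedIdeal.mem_bot _).mp hy) ▸ I.zero_mem⟩)
    -- support
    set supp : X → Finset (E ≃ₐ[F] E) := fun z => Finset.univ.filter (fun γ => rep z γ ≠ 0)
      with hsupp
    have hex : ∃ n : ℕ, ∃ z, z ∈ I ∧ z ≠ 0 ∧ (supp z).card = n := by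
      obtain ⟨z, h1, h2⟩ := hex0
      exact ⟨_, z, h1, h2, rfl⟩
    obtain ⟨z, hzI, hz0, hzcard⟩ := Nat.find_spec hex
    have hmin : ∀ w, w ∈ I → w ≠ 0 → Nat.find hex ≤ (supp w).card :=
      fun w hw hw0 => Nat.find_min' hex ⟨w, hw, hw0, rfl⟩
    -- pick γ₀ in the support of z
    have hsuppz : ∃ γ₀, rep z γ₀ ≠ 0 := by
      by_contra h
      push_neg at h
      exact hz0 (by rw [← hLrep z, show rep z = 0 from funext h, hL0])
    obtain ⟨γ₀, hγ₀⟩ := hsuppz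
    -- normalize
    set b : E := (c 1 γ₀ : E) * (rep z γ₀)⁻¹ with hb
    have hbne : b ≠ 0 := mul_ne_zero (c 1 γ₀).ne_zero (inv_ne_zero hγ₀)
    set w : X := ι b * (z * ((x γ₀)⁻¹ : Xˣ)) with hw
    have hwI : w ∈ I := I.mul_mem_left _ _ (I.mul_mem_right _ _ hzI)
    have hwrep : rep w = fun δ => b * (rep z (δ * γ₀) * (c δ γ₀ : E)⁻¹) := by
      rw [hw]
      conv_lhs => rw [← hLrep z, hshift, hιmul, hrepL]
    have hw1 : rep w 1 = 1 := by
      rw [hwrep]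
      simp only [one_mul, hb]
      field_simp
    have hw0 : w ≠ 0 := fun h => by
      rw [h, hrep0] at hw1
      exact one_ne_zero hw1.symm
    have hwcard : (supp w).card = (supp z).card := by
      rw [show supp w = (supp z).map (Equiv.mulRight γ₀⁻¹).toEmbedding from ?_, Finset.card_map]
      ext δ
      rw [Finset.mem_map_equiv]
      simp only [hsupp, Finset.mem_filter, Finset.mem_univ, true_and, hwrep,
        Equiv.mulRight_symm, Equiv.coe_mulRight, inv_inv]
      constructor
      · intro h h2
        exact h (by rw [h2]; simp)
      · intro h
        exact mul_ne_zero hbne (mul_ne_zero h (inv_ne_zero (c δ γ₀).ne_zero))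
    -- the support of w must be {1}
    have hsuppone : ∀ δ : E ≃ₐ[F] E, δ ≠ 1 → rep w δ = 0 := by
      intro δ₀ hδ₀
      by_contra hne
      obtain ⟨e, he⟩ := hwit δ₀ hδ₀
      set w' : X := ι e * w - w * ι e with hw'
      have hw'I : w' ∈ I := I.sub_mem (I.mul_mem_left _ _ hwI) (I.mul_mem_right _ _ hwI)
      have hw'rep : rep w' = fun δ => rep w δ * (e - δ e) := by
        rw [hw']
        conv_lhs => rw [← hLrep w, hιmul, hmulι, ← hLsub]
        rw [hrepL]
        funext δ
        simp only [Pi.sub_apply]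
        ring
      have hw'0 : w' ≠ 0 := fun h => by
        have := congrFun (h ▸ hw'rep : rep (0:X) = _) δ₀
        rw [hrep0] at this
        exact (mul_ne_zero hne (sub_ne_zero.mpr fun h' => he h'.symm)) this.symm
      have hsub : supp w' ⊆ (supp w).erase 1 := by
        intro δ hδ
        simp only [hsupp, Finset.mem_filter, Finset.mem_univ, true_and, hw'rep] at hδ
        rw [Finset.mem_erase]
        refine ⟨?_, ?_⟩
        · rintro rfl
          exact hδ (by simp)
        · simp only [hsupp, Finset.mem_filter, Finset.mem_univ, true_and]
          exact fun h => hδ (by rw [h, zero_mul])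
      have h1mem : (1 : E ≃ₐ[F] E) ∈ supp w := by
        simp only [hsupp, Finset.mem_filter, Finset.mem_univ, true_and, hw1]
        exact one_ne_zero
      have hlt : (supp w').card < (supp w).card := by
        calc (supp w').card ≤ ((supp w).erase 1).card := Finset.card_le_card hsub
        _ < (supp w).card := Finset.card_erase_lt_of_mem h1mem
      have := hmin w' hw'I hw'0
      omega
    -- so w = x 1, a unit, hence I = ⊤
    have hwx1 : w = (x 1 : X) := by
      conv_lhs => rw [← hLrep w]
      simp only [hLdef]
      rw [Finset.sum_eq_single 1 (fun γ _ hγ => by rw [hsuppone γ hγ]; simp) (by simp), hw1,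
        map_one, one_mul]
    rw [← I.one_mem_iff]
    have := I.mul_mem_left (((x 1)⁻¹ : Xˣ) : X) _ hwI
    rwa [hwx1, Units.inv_mul] at this
  · -- dimension
    have hLlin : IsLinearMap F L := by
      constructor
      · intro f g
        simp [hLdef, map_add, add_mul, Finset.sum_add_distrib]
      · intro a f
        simp only [hLdef, Pi.smul_apply, Finset.smul_sum]
        refine Finset.sum_congr rfl fun γ _ => ?_
        rw [Algebra.smul_def, map_mul, ι.commutes, ← Algebra.smul_def, smul_mul_assoc]
    have hequiv : ((E ≃ₐ[F] E) → E) ≃ₗ[F] X :=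
      LinearEquiv.ofBijective (hLlin.mk' L) ⟨hLinj, fun y => ⟨rep y, hLrep y⟩⟩
    rw [← hequiv.finrank_eq, Module.finrank_pi_fintype, Finset.sum_const, Finset.card_univ,
      ← Nat.card_eq_fintype_card, IsGalois.card_aut_eq_finrank, smul_eq_mul, sq]
end

section
/- Let ψ_1,…,ψ_m be quadratic Dirichlet characters and p a prime with ψ_i(p) = -1 for i in a nonempty subset S (after reindexing S = {1,…,m}). Define primes r_0 = p and r_1,…,r_{m-1} with ψ_i(r_j) = (-1)^{δ_{ij}}·ψ_i(r_{j-1}). Set n_i = r_{i-1}·r_i for 1 ≤ i ≤ m-1 and n_m = r_{m-1}. Then ψ_i(n_j) = -1 if i = j and ψ_i(n_j) = 1 if i ≠ j, for all 1 ≤ i,j ≤ m. -/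
/-- The telescoping construction: let `ψ_1, …, ψ_m` be (completely multiplicative,
`±1`-valued) quadratic characters and `p` a prime with `ψ_i(p) = -1` for all
`i = 1, …, m`.  Choose primes `r_0 = p, r_1, …, r_{m-1}` with
`ψ_i(r_j) = (-1)^{δ_{ij}}·ψ_i(r_{j-1})`, and set `n_j = r_{j-1}·r_j` for `1 ≤ j ≤ m-1`
and `n_m = r_{m-1}`.  Then `ψ_i(n_j) = -1` if `i = j` and `ψ_i(n_j) = 1` otherwise, for
all `1 ≤ i, j ≤ m`. -/
theorem telescoping_signs
    (m : ℕ) (hm : 1 ≤ m) (p : ℕ) (hp : p.Prime)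
    (ψ : ℕ → ℕ → ℤ) (r : ℕ → ℕ)
    (hmul : ∀ i a b, ψ i (a * b) = ψ i a * ψ i b)
    (hval : ∀ i j, j ≤ m - 1 → ψ i (r j) = 1 ∨ ψ i (r j) = -1)
    (hr0 : r 0 = p)
    (hrprime : ∀ j, j ≤ m - 1 → (r j).Prime)
    (hψp : ∀ i, 1 ≤ i → i ≤ m → ψ i p = -1)
    (hrec : ∀ i j, 1 ≤ i → i ≤ m → 1 ≤ j → j ≤ m - 1 →
      ψ i (r j) = (if i = j then -1 else 1) * ψ i (r (j - 1))) :
    ∀ i j, 1 ≤ i → i ≤ m → 1 ≤ j → j ≤ m →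
      ψ i (if j = m then r (m - 1) else r (j - 1) * r j) = if i = j then -1 else 1 := by
  have key : ∀ j, j ≤ m - 1 → ∀ i, 1 ≤ i → i ≤ m →
      ψ i (r j) = if i ≤ j then 1 else -1 := by
    intro j
    induction j with
    | zero =>
      intro _ i hi1 him
      rw [hr0, hψp i hi1 him, if_neg (by omega)]
    | succ k ih =>
      intro hk i hi1 him
      have h := hrec i (k + 1) hi1 him (by omega) hk
      simp only [Nat.add_sub_cancel] at h
      rw [h, ih (by omega) i hi1 him]
      by_cases hik : i = k + 1
      · rw [if_pos hik, if_neg (by omega), if_pos (by omega)]; ring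
      · rw [if_neg hik]
        by_cases hle : i ≤ k
        · rw [if_pos hle, if_pos (by omega)]; ring
        · rw [if_neg hle, if_neg (by omega)]; ring
  intro i j hi1 him hj1 hjm
  by_cases hjm' : j = m
  · rw [if_pos hjm', key (m - 1) le_rfl i hi1 him]
    by_cases hij : i = j
    · rw [if_pos hij, if_neg (by omega)]
    · rw [if_neg hij, if_pos (by omega)]
  · rw [if_neg hjm', hmul, key (j - 1) (by omega) i hi1 him,
      key j (by omega) i hi1 him]
    by_cases hij : i = j
    · rw [if_pos hij, if_neg (by omega), if_pos (by omega)]; ring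
    · rw [if_neg hij]
      by_cases hle : i ≤ j - 1
      · rw [if_pos hle, if_pos (by omega)]; ring
      · rw [if_neg hle, if_neg (by omega)]; ring
end
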